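/- Let φ : ℝⁿ → (−∞,∞] be proper, x* ∈ ℝⁿ, η > 0, and let ψ : [0,η) → [0,∞) be continuous and concave with ψ(0) = 0, continuously differentiable on (0,η) with ψ′ > 0 on (0,η). Let {x^k}_{k∈ℕ} ⊂ ℝⁿ, {D_k} ⊂ (0,∞), k̄ ∈ ℕ and c > 0 be such that for all k > k̄: (a) φ(x*) < φ(x^k) < φ(x*) + η; (b) ψ′(φ(x^k) − φ(x*))·D_k ≥ 1; (c) φ(x^k) − φ(x^{k+1}) ≥ c‖x^{k+1} − x^k‖·D_k. Then Σ_{k>k̄} ‖x^{k+1} − x^k‖ ≤ ψ(φ(x^{k̄+1}) − φ(x*))/c < ∞; in particular, {x^k} is a Cauchy sequence and converges. (In the paper, D_k = dist(0, ∂φ(x^k)) with φ = f + δ_{Π*}, so that ∂φ(x^k) = ∇f(x^k) + N_{Π*}(x^k), hypothesis (b) is the Kurdyka–Łojasiewicz inequality, and (c) follows from the Armijo decrease together with the angle (non-degeneracy) condition; this is the global convergence mechanism of the PGiPN algorithm.) -/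
import Mathlib


open Filter

/-- the KL-based convergence mechanism. Let `φ : ℝⁿ → (−∞,∞]` be proper,
`ψ` a concave desingularizing function on `[0,η)` with derivative `ψ′ > 0` on `(0,η)`, and
suppose for all `k > k̄`: (a) `φ(x*) < φ(x^k) < φ(x*) + η`,
(b) `ψ′(φ(x^k) − φ(x*))·D_k ≥ 1`, (c) `φ(x^k) − φ(x^{k+1}) ≥ c‖x^{k+1} − x^k‖·D_k`.
Then `Σ_{k>k̄} ‖x^{k+1} − x^k‖ ≤ ψ(φ(x^{k̄+1}) − φ(x*))/c < ∞`, so `{x^k}` converges. -/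
theorem stmt18 {n : ℕ} (φ : EuclideanSpace ℝ (Fin n) → EReal)
    (hbot : ∀ y, φ y ≠ ⊥) (hproper : ∃ y, φ y ≠ ⊤)
    (xstar : EuclideanSpace ℝ (Fin n)) (η : ℝ) (hη : 0 < η)
    (ψ ψ' : ℝ → ℝ)
    (hψcont : ContinuousOn ψ (Set.Ico 0 η)) (hψ0 : ψ 0 = 0)
    (hψnonneg : ∀ t ∈ Set.Ico (0 : ℝ) η, 0 ≤ ψ t)
    (hψconc : ConcaveOn ℝ (Set.Ico 0 η) ψ)
    (hψderiv : ∀ t ∈ Set.Ioo (0 : ℝ) η, HasDerivAt ψ (ψ' t) t)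
    (hψ'cont : ContinuousOn ψ' (Set.Ioo 0 η))
    (hψ'pos : ∀ t ∈ Set.Ioo (0 : ℝ) η, 0 < ψ' t)
    (x : ℕ → EuclideanSpace ℝ (Fin n)) (D : ℕ → ℝ) (hD : ∀ k, 0 < D k)
    (kbar : ℕ) (c : ℝ) (hc : 0 < c)
    (ha : ∀ k > kbar, φ xstar < φ (x k) ∧ φ (x k) < φ xstar + ((η : ℝ) : EReal))
    (hb : ∀ k > kbar, 1 ≤ ψ' ((φ (x k) - φ xstar).toReal) * D k)
    (hdes : ∀ k > kbar,
      ((c * ‖x (k + 1) - x k‖ * D k : ℝ) : EReal) ≤ φ (x k) - φ (x (k + 1))) :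
    Summable (fun j : ℕ => ‖x (kbar + 1 + j + 1) - x (kbar + 1 + j)‖) ∧
    (∑' j : ℕ, ‖x (kbar + 1 + j + 1) - x (kbar + 1 + j)‖) ≤
      ψ ((φ (x (kbar + 1)) - φ xstar).toReal) / c ∧
    ∃ xlim : EuclideanSpace ℝ (Fin n), Tendsto x atTop (nhds xlim) := by
  classical
  have hstar_ne_top : φ xstar ≠ ⊤ := ne_top_of_lt (ha (kbar + 1) (by omega)).1
  have hstar_ne_bot : φ xstar ≠ ⊥ := hbot xstar
  have hxk_ne_top : ∀ k > kbar, φ (x k) ≠ ⊤ := by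
    intro k hk htop
    have h2 := (ha k hk).2
    rw [htop] at h2
    exact not_top_lt (lt_of_lt_of_le h2 le_top)
  set s : ℝ := (φ xstar).toReal with hs
  set f : ℕ → ℝ := fun k => (φ (x k)).toReal with hf
  have hstar_eq : φ xstar = ((s : ℝ) : EReal) := (EReal.coe_toReal hstar_ne_top hstar_ne_bot).symm
  have hxk_eq : ∀ k > kbar, φ (x k) = ((f k : ℝ) : EReal) := fun k hk =>
    (EReal.coe_toReal (hxk_ne_top k hk) (hbot (x k))).symm
  set t : ℕ → ℝ := fun k => f k - s with ht
  have htval : ∀ k > kbar, (φ (x k) - φ xstar).toReal = t k := by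
    intro k hk
    rw [hxk_eq k hk, hstar_eq, ← EReal.coe_sub, EReal.toReal_coe]
  have htIoo : ∀ k > kbar, t k ∈ Set.Ioo (0 : ℝ) η := by
    intro k hk
    obtain ⟨h1, h2⟩ := ha k hk
    rw [hxk_eq k hk, hstar_eq] at h1 h2
    rw [← EReal.coe_add] at h2
    constructor
    · have := EReal.coe_lt_coe_iff.mp h1; simp only [ht]; linarith
    · have := EReal.coe_lt_coe_iff.mp h2; simp only [ht]; linarith
  have hdec : ∀ k > kbar, c * ‖x (k + 1) - x k‖ * D k ≤ t k - t (k + 1) := by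
    intro k hk
    have h := hdes k hk
    rw [hxk_eq k hk, hxk_eq (k + 1) (by omega), ← EReal.coe_sub] at h
    have := EReal.coe_le_coe_iff.mp h
    simp only [ht]; linarith
  have hkey : ∀ k > kbar, c * ‖x (k + 1) - x k‖ ≤ ψ (t k) - ψ (t (k + 1)) := by
    intro k hk
    have htk := htIoo k hk
    have htk1 := htIoo (k + 1) (by omega)
    have hDk := hD k
    have hnorm : (0 : ℝ) ≤ ‖x (k + 1) - x k‖ := norm_nonneg _
    have hb' : 1 ≤ ψ' (t k) * D k := by
      have := hb k hk; rwa [htval k hk] at this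
    have hψ'k : 0 < ψ' (t k) := hψ'pos _ htk
    have hdk := hdec k hk
    have hprod_nonneg : 0 ≤ c * ‖x (k + 1) - x k‖ * D k := by positivity
    have hle : t (k + 1) ≤ t k := by linarith
    rcases eq_or_lt_of_le hle with heq | hlt
    · have hz : ‖x (k + 1) - x k‖ = 0 := by
        by_contra hne
        have := mul_pos (mul_pos hc (lt_of_le_of_ne hnorm (Ne.symm hne))) hDk
        linarith
      rw [hz, heq]
      simp
    · have hslope := hψconc.le_slope_of_hasDerivAt
        (Set.mem_Ico.mpr ⟨le_of_lt htk1.1, htk1.2⟩)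
        (Set.mem_Ico.mpr ⟨le_of_lt htk.1, htk.2⟩) hlt (hψderiv _ htk)
      rw [slope_def_field] at hslope
      have hpos : 0 < t k - t (k + 1) := by linarith
      rw [le_div_iff₀ hpos] at hslope
      nlinarith [mul_le_mul_of_nonneg_left hdk (le_of_lt hψ'k),
        mul_le_mul_of_nonneg_left hb' (mul_nonneg hc.le hnorm)]
  set a : ℕ → ℝ := fun j => ‖x (kbar + 1 + j + 1) - x (kbar + 1 + j)‖ with haj
  have ha_nonneg : ∀ j, 0 ≤ a j := fun j => norm_nonneg _
  have hpartial : ∀ N : ℕ, c * (∑ j ∈ Finset.range N, a j) ≤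
      ψ (t (kbar + 1)) - ψ (t (kbar + 1 + N)) := by
    intro N
    induction N with
    | zero => simp
    | succ N ih =>
      rw [Finset.sum_range_succ, mul_add]
      have hk := hkey (kbar + 1 + N) (by omega)
      have haN : a N = ‖x (kbar + 1 + N + 1) - x (kbar + 1 + N)‖ := rfl
      have hidx : kbar + 1 + (N + 1) = kbar + 1 + N + 1 := by omega
      rw [hidx, haN]
      linarith
  have hψnn : ∀ N : ℕ, 0 ≤ ψ (t (kbar + 1 + N)) := fun N =>
    hψnonneg _ (Set.mem_Ico.mpr ⟨le_of_lt (htIoo _ (by omega)).1, (htIoo _ (by omega)).2⟩)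
  have hbound : ∀ N : ℕ, (∑ j ∈ Finset.range N, a j) ≤ ψ (t (kbar + 1)) / c := by
    intro N
    rw [le_div_iff₀ hc]
    have h1 := hpartial N
    have h2 := hψnn N
    nlinarith
  have hsummable : Summable a := summable_of_sum_range_le ha_nonneg hbound
  have htsum : (∑' j : ℕ, a j) ≤ ψ (t (kbar + 1)) / c :=
    Summable.tsum_le_of_sum_range_le hsummable hbound
  have hteq : (φ (x (kbar + 1)) - φ xstar).toReal = t (kbar + 1) := htval _ (by omega)
  refine ⟨hsummable, by rw [hteq]; exact htsum, ?_⟩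
  set y : ℕ → EuclideanSpace ℝ (Fin n) := fun j => x (kbar + 1 + j) with hy
  have hdist : (fun j : ℕ => dist (y j) (y (j + 1))) = a := by
    funext j
    have hidx : kbar + 1 + (j + 1) = kbar + 1 + j + 1 := by omega
    simp only [hy, haj, dist_eq_norm, hidx, norm_sub_rev]
  have hcauchy : CauchySeq y := cauchySeq_of_summable_dist (by rw [hdist]; exact hsummable)
  obtain ⟨xlim, hxlim⟩ := cauchySeq_tendsto_of_complete hcauchy
  refine ⟨xlim, ?_⟩
  have hsub : Tendsto (fun k : ℕ => k - (kbar + 1)) atTop atTop :=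
    tendsto_sub_atTop_nat (kbar + 1)
  have h1 : Tendsto (fun k => y (k - (kbar + 1))) atTop (nhds xlim) := hxlim.comp hsub
  apply h1.congr'
  filter_upwards [eventually_ge_atTop (kbar + 1)] with k hk
  have hidx : kbar + 1 + (k - (kbar + 1)) = k := by omega
  show y (k - (kbar + 1)) = x k
  simp only [hy, hidx]
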